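/- arXiv:1601.08237 — 5 statements merged into one kernel-verified Lean document; each statement's English description precedes it below -/
import Mathlib

section
/- Let V be a pseudovariety of ordered monoids, L ⊆ B* a regular language with syntactic ordered monoid Synt(L), and u, v pseudowords in Ω_A M. Then the inequality u ≤ v holds in Synt(L) if and only if for every monoid homomorphism α : A* → B* and all words x, y ∈ B*, x·\hat{α}(u)·y ∈ \overline{L} implies x·\hat{α}(v)·y ∈ \overline{L}. -/
/-- The syntactic quasi-order of the language `L ⊆ B*`:
`u ≤_L v` iff for all words `x, y`, `x u y ∈ L` implies `x v y ∈ L`. -/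
def synLe {B : Type*} (L : Set (FreeMonoid B)) (u v : FreeMonoid B) : Prop :=
  ∀ x y : FreeMonoid B, x * u * y ∈ L → x * v * y ∈ L

/-- The syntactic congruence `≤_L ∩ ≥_L` of the language `L`. -/
def synCon {B : Type*} (L : Set (FreeMonoid B)) : Con (FreeMonoid B) where
  r u v := synLe L u v ∧ synLe L v u
  iseqv := ⟨fun _ => ⟨fun _ _ h => h, fun _ _ h => h⟩,
    fun h => ⟨h.2, h.1⟩,
    fun h1 h2 => ⟨fun x y h => h2.1 x y (h1.1 x y h), fun x y h => h1.2 x y (h2.2 x y h)⟩⟩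
  mul' := by
    intro a b c d h1 h2
    refine ⟨fun p q h => ?_, fun p q h => ?_⟩
    · have step1 := h1.1 p (c * q) (by simpa [mul_assoc] using h)
      have step2 := h2.1 (p * b) q (by simpa [mul_assoc] using step1)
      simpa [mul_assoc] using step2
    · have step1 := h1.2 p (d * q) (by simpa [mul_assoc] using h)
      have step2 := h2.2 (p * a) q (by simpa [mul_assoc] using step1)
      simpa [mul_assoc] using step2

/-- The syntactic monoid of `L`: the quotient of `B*` by the syntactic congruence. -/
def SyntMon {B : Type*} (L : Set (FreeMonoid B)) : Type _ :=
  (synCon L).Quotient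

instance {B : Type*} (L : Set (FreeMonoid B)) : Monoid (SyntMon L) :=
  inferInstanceAs (Monoid (synCon L).Quotient)

/-- The syntactic (partial) order on the syntactic monoid, induced by `≤_L`. -/
def sLe {B : Type*} (L : Set (FreeMonoid B)) : SyntMon L → SyntMon L → Prop :=
  Quotient.lift₂ (synLe L) (by
    intro a b c d h1 h2
    obtain ⟨h1l, h1r⟩ : synLe L a c ∧ synLe L c a := h1
    obtain ⟨h2l, h2r⟩ : synLe L b d ∧ synLe L d b := h2
    exact propext ⟨fun h x y hxy => h2l x y (h x y (h1r x y hxy)),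
      fun h x y hxy => h2r x y (h x y (h1l x y hxy))⟩)

/-! The syntactic morphism `B* → Synt(L)` extends to a locally constant morphism
`ψ̂ : MB → Synt(L)`; since `L` is saturated by the syntactic congruence and `B*` is dense,
`closure L = ψ̂⁻¹(ψ̂ L)`, so the condition on the right-hand side for a given `α` says exactly
`ψ̂(α̂ u) ≤_L ψ̂(α̂ v)`. Conversely every locally constant `ψ : MA → Synt(L)` is of the form
`ψ̂ ∘ α̂`: let `α` send each letter `a` to a word representing `ψ(a)`; then `ψ` and `ψ̂ ∘ α̂`
are locally constant and agree on the dense subset `A*`. -/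

namespace SyntMon

variable {B : Type*} {L : Set (FreeMonoid B)}

variable (L) in
def mk : FreeMonoid B →* SyntMon L := (synCon L).mk'

theorem mk_surjective : Function.Surjective (mk L) := (synCon L).mk'_surjective

theorem mk_eq_mk_iff {w w' : FreeMonoid B} : mk L w = mk L w' ↔ synCon L w w' := Con.eq _

theorem sLe_mk_mk_iff {w w' : FreeMonoid B} : sLe L (mk L w) (mk L w') ↔ synLe L w w' := Iff.rfl

theorem preimage_mk_image_mk : mk L ⁻¹' (mk L '' L) = L := by
  refine Set.Subset.antisymm ?_ (Set.subset_preimage_image _ _)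
  rintro w ⟨w', hw', hw'w⟩
  simpa using (mk_eq_mk_iff.mp hw'w).1 1 1 (by simpa using hw')

theorem sLe_iff_forall_mul_mem_image (m n : SyntMon L) :
    sLe L m n ↔ ∀ x y : FreeMonoid B,
      mk L x * m * mk L y ∈ mk L '' L → mk L x * n * mk L y ∈ mk L '' L := by
  obtain ⟨a, rfl⟩ := mk_surjective m
  obtain ⟨b, rfl⟩ := mk_surjective n
  simp only [← map_mul, ← Set.mem_preimage (f := mk L), preimage_mk_image_mk]
  exact sLe_mk_mk_iff

end SyntMon

theorem FreeMonoid.exists_comp_eq_of_surjective {A M N : Type*} [Monoid M] [Monoid N]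
    {π : M →* N} (hπ : Function.Surjective π) (f : FreeMonoid A →* N) :
    ∃ α : FreeMonoid A →* M, π.comp α = f :=
  ⟨FreeMonoid.lift (Function.surjInv hπ ∘ f ∘ FreeMonoid.of),
    FreeMonoid.hom_eq fun a => by simp [Function.surjInv_eq hπ]⟩

section LocallyConstant

variable {W X Y : Type*} [TopologicalSpace X] {g : W → X}

theorem IsLocallyConstant.eq_of_denseRange {f f' : X → Y} (hf : IsLocallyConstant f)
    (hf' : IsLocallyConstant f') (hg : DenseRange g) (h : f ∘ g = f' ∘ g) : f = f' := by
  funext x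
  obtain ⟨w, hw, hw'⟩ := hg.exists_mem_open ((hf {f x}).inter (hf' {f' x})) ⟨x, rfl, rfl⟩
  rw [← hw.out, ← hw'.out]
  exact congrFun h w

theorem IsLocallyConstant.closure_image_preimage_eq {f : X → Y} (hf : IsLocallyConstant f)
    (hg : DenseRange g) (T : Set Y) : closure (g '' (g ⁻¹' (f ⁻¹' T))) = f ⁻¹' T := by
  have hclosed : IsClosed (f ⁻¹' T) := by
    rw [← isOpen_compl_iff, ← Set.preimage_compl]
    exact hf _
  refine Set.Subset.antisymm (closure_minimal (Set.image_preimage_subset _ _) hclosed) ?_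
  rw [Set.image_preimage_eq_inter_range]
  exact hg.open_subset_closure_inter (hf T)

end LocallyConstant

section Profinite

variable {B MB : Type*} [Monoid MB] [TopologicalSpace MB] {ιB : FreeMonoid B →* MB}

theorem exists_isLocallyConstant_extension
    (hext : ∀ (N : Type) [Monoid N] [Finite N] (φ : FreeMonoid B →* N),
      ∃ ψ : MB →* N, (∀ s : Set N, IsOpen (⇑ψ ⁻¹' s)) ∧ ∀ u, ψ (ιB u) = φ u)
    {N : Type*} [Monoid N] [Finite N] (φ : FreeMonoid B →* N) :
    ∃ ψ : MB →* N, IsLocallyConstant ψ ∧ ∀ w, ψ (ιB w) = φ w := by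
  obtain ⟨ψ, hψ, hψι⟩ := hext (Shrink.{0} N) (Shrink.mulEquiv.symm.toMonoidHom.comp φ)
  exact ⟨Shrink.mulEquiv.toMonoidHom.comp ψ, IsLocallyConstant.comp hψ _, fun w => by simp [hψι]⟩

variable {L : Set (FreeMonoid B)} {ψB : MB →* SyntMon L}

theorem closure_image_eq_preimage (hψB : IsLocallyConstant ψB)
    (hψBι : ∀ w, ψB (ιB w) = SyntMon.mk L w) (hdB : DenseRange ιB) :
    closure (ιB '' L) = ψB ⁻¹' (SyntMon.mk L '' L) := by
  have hL : ιB ⁻¹' (ψB ⁻¹' (SyntMon.mk L '' L)) = L := by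
    rw [← Set.preimage_comp, show ψB ∘ ιB = SyntMon.mk L from funext hψBι,
      SyntMon.preimage_mk_image_mk]
  conv_lhs => rw [← hL]
  exact hψB.closure_image_preimage_eq hdB _

theorem forall_mul_mem_closure_iff_sLe (hψB : IsLocallyConstant ψB)
    (hψBι : ∀ w, ψB (ιB w) = SyntMon.mk L w) (hdB : DenseRange ιB) (z z' : MB) :
    (∀ x y : FreeMonoid B, ιB x * z * ιB y ∈ closure (ιB '' L) →
      ιB x * z' * ιB y ∈ closure (ιB '' L)) ↔ sLe L (ψB z) (ψB z') := by
  rw [closure_image_eq_preimage hψB hψBι hdB, SyntMon.sLe_iff_forall_mul_mem_image]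
  simp only [Set.mem_preimage, map_mul, hψBι]

end Profinite

theorem ineq_syntactic_iff_general
    {A B MA MB : Type*}
    [Monoid MA] [TopologicalSpace MA]
    [Monoid MB] [TopologicalSpace MB]
    (ιA : FreeMonoid A →* MA) (ιB : FreeMonoid B →* MB)
    (hdA : DenseRange ⇑ιA) (hdB : DenseRange ⇑ιB)
    (hextB : ∀ (N : Type) [Monoid N] [Finite N] (φ : FreeMonoid B →* N),
      ∃ ψ : MB →* N, (∀ s : Set N, IsOpen (⇑ψ ⁻¹' s)) ∧ ∀ u, ψ (ιB u) = φ u)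
    (hlift : ∀ α : FreeMonoid A →* FreeMonoid B,
      ∃ hatα : MA →* MB, Continuous ⇑hatα ∧ ∀ u, hatα (ιA u) = ιB (α u))
    (L : Set (FreeMonoid B)) (hreg : Finite (SyntMon L))
    (u v : MA) :
    (∀ ψ : MA →* SyntMon L, (∀ s : Set (SyntMon L), IsOpen (⇑ψ ⁻¹' s)) →
      sLe L (ψ u) (ψ v)) ↔
    (∀ (α : FreeMonoid A →* FreeMonoid B) (hatα : MA →* MB), Continuous ⇑hatα →
      (∀ w : FreeMonoid A, hatα (ιA w) = ιB (α w)) →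
      ∀ x y : FreeMonoid B, ιB x * hatα u * ιB y ∈ closure (⇑ιB '' L) →
        ιB x * hatα v * ιB y ∈ closure (⇑ιB '' L)) := by
  obtain ⟨ψB, hψB, hψBι⟩ := exists_isLocallyConstant_extension hextB (SyntMon.mk L)
  have key := forall_mul_mem_closure_iff_sLe hψB hψBι hdB
  constructor
  · intro H _ hatα hcont _
    exact (key _ _).2 (H (ψB.comp hatα) (hψB.comp_continuous hcont))
  · intro H ψ hψ
    obtain ⟨α, hα⟩ := FreeMonoid.exists_comp_eq_of_surjective SyntMon.mk_surjective (ψ.comp ιA)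
    obtain ⟨hatα, hcont, hcomm⟩ := hlift α
    have hψ_eq : ⇑ψ = ψB ∘ hatα :=
      IsLocallyConstant.eq_of_denseRange hψ (hψB.comp_continuous hcont) hdA <|
      funext fun w => by
        simpa [hcomm, hψBι] using (DFunLike.congr_fun hα w).symm
    rw [hψ_eq]
    exact (key _ _).1 (H α hatα hcont hcomm)

/-- Let `MA`, `MB` be the free profinite monoids over the finite alphabets `A`, `B`
(axiomatized as below), `L ⊆ B*` a regular language (its syntactic monoid is finite) and
`u, v ∈ MA` pseudowords.  The inequality `u ≤ v` holds in the syntactic ordered monoid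
`Synt(L)` (i.e. `ψ u ≤_L ψ v` for every continuous homomorphism `ψ : MA → Synt(L)`) if
and only if for every homomorphism `α : A* → B*` (with continuous extension
`α̂ : MA → MB`) and all words `x, y ∈ B*`, `x · α̂(u) · y ∈ closure L` implies
`x · α̂(v) · y ∈ closure L`. -/
theorem ineq_syntactic_iff
    (V : ∀ (S : Type) [Monoid S] [PartialOrder S], Prop)  -- a pseudovariety of ordered monoids
    {A B MA MB : Type*} [Fintype A] [Fintype B]
    [Monoid MA] [TopologicalSpace MA] [CompactSpace MA] [T2Space MA]
    [Monoid MB] [TopologicalSpace MB] [CompactSpace MB] [T2Space MB]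
    (hmulA : Continuous fun p : MA × MA => p.1 * p.2)
    (hmulB : Continuous fun p : MB × MB => p.1 * p.2)
    (ιA : FreeMonoid A →* MA) (ιB : FreeMonoid B →* MB)
    (hdA : DenseRange ⇑ιA) (hdB : DenseRange ⇑ιB)
    (hextA : ∀ (N : Type) [Monoid N] [Finite N] (φ : FreeMonoid A →* N),
      ∃ ψ : MA →* N, (∀ s : Set N, IsOpen (⇑ψ ⁻¹' s)) ∧ ∀ u, ψ (ιA u) = φ u)
    (hextB : ∀ (N : Type) [Monoid N] [Finite N] (φ : FreeMonoid B →* N),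
      ∃ ψ : MB →* N, (∀ s : Set N, IsOpen (⇑ψ ⁻¹' s)) ∧ ∀ u, ψ (ιB u) = φ u)
    (hlift : ∀ α : FreeMonoid A →* FreeMonoid B,
      ∃ hatα : MA →* MB, Continuous ⇑hatα ∧ ∀ u, hatα (ιA u) = ιB (α u))
    (L : Set (FreeMonoid B)) (hreg : Finite (SyntMon L))
    (u v : MA) :
    (∀ ψ : MA →* SyntMon L, (∀ s : Set (SyntMon L), IsOpen (⇑ψ ⁻¹' s)) →
      sLe L (ψ u) (ψ v)) ↔
    (∀ (α : FreeMonoid A →* FreeMonoid B) (hatα : MA →* MB), Continuous ⇑hatα →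
      (∀ w : FreeMonoid A, hatα (ιA w) = ιB (α w)) →
      ∀ x y : FreeMonoid B, ιB x * hatα u * ιB y ∈ closure (⇑ιB '' L) →
        ιB x * hatα v * ιB y ∈ closure (⇑ιB '' L)) :=
  ineq_syntactic_iff_general ιA ιB hdA hdB hextB hlift L hreg u v
end

section
/- Let V be a pseudovariety of ordered monoids and u, v ∈ Ω_A M. The inequality u ≤ v holds in V if and only if for every V-recognizable language L ⊆ A*, membership u ∈ \overline{L} implies v ∈ \overline{L}. -/
/-- `φ` recognizes `L` with an up-closed (order filter) accepting set. -/
def ORecognizes {A S : Type*} [Monoid S] [PartialOrder S]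
    (φ : FreeMonoid A →* S) (L : Set (FreeMonoid A)) : Prop :=
  ∃ F : Set S, (∀ a b : S, a ≤ b → a ∈ F → b ∈ F) ∧ L = ⇑φ ⁻¹' F

/-- `L` is `V`-recognizable: `L = φ⁻¹(F)` for a homomorphism `φ : A* → S` into a finite
ordered monoid `S ∈ V` and an up-closed subset `F ⊆ S`. -/
def VRecognizable (V : ∀ (S : Type) [Monoid S] [PartialOrder S], Prop)
    {A : Type*} (L : Set (FreeMonoid A)) : Prop :=
  ∃ (S : Type) (iS : Monoid S) (oS : PartialOrder S), @V S iS oS ∧ Finite S ∧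
    ∃ φ : @MonoidHom (FreeMonoid A) S _ (@MulOneClass.toMulOne S (@Monoid.toMulOneClass S iS)),
      @ORecognizes A S iS oS φ L

/-- The inequality `u ≤ v` (of elements of the free profinite monoid `M`) holds in the
pseudovariety `V` of ordered monoids: `ψ u ≤ ψ v` for every continuous homomorphism `ψ`
from `M` into a (finite, discrete) member of `V`. -/
def IneqHoldsIn (V : ∀ (S : Type) [Monoid S] [PartialOrder S], Prop)
    {M : Type*} [Monoid M] [TopologicalSpace M] (u v : M) : Prop :=
  ∀ (S : Type) [Monoid S] [PartialOrder S], V S →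
    ∀ ψ : M →* S, (∀ s : Set S, IsOpen (⇑ψ ⁻¹' s)) → ψ u ≤ ψ v

/-!
For a continuous morphism `ψ : M → S` into a finite discrete monoid and an up-set `F ⊆ S`,
the preimage `ψ⁻¹ F` is clopen, and a clopen set is the closure of its trace on the dense
image of `A*`. Hence the closure of the recognized language `(ψ ∘ ι)⁻¹ F` is `ψ⁻¹ F`, and
membership of `u`, `v` in these closures is the statement `ψ u ∈ F → ψ v ∈ F`. Taking
`F = Set.Ici (ψ u)` turns this back into `ψ u ≤ ψ v`.
-/

theorem isClopen_preimage_of_forall_isOpen {X Y : Type*} [TopologicalSpace X] {f : X → Y}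
    (hf : ∀ s : Set Y, IsOpen (f ⁻¹' s)) (s : Set Y) : IsClopen (f ⁻¹' s) :=
  ⟨isOpen_compl_iff.mp (hf sᶜ), hf s⟩

theorem DenseRange.closure_image_preimage_of_isClopen {α X : Type*} [TopologicalSpace X]
    {f : α → X} (hf : DenseRange f) {s : Set X} (hs : IsClopen s) :
    closure (f '' (f ⁻¹' s)) = s :=
  (closure_minimal (Set.image_preimage_subset f s) hs.isClosed).antisymm
    (hf.subset_closure_image_preimage_of_isOpen hs.isOpen)

theorem ineqHoldsIn_iff_closures_general
    {A M : Type*} [Monoid M] [TopologicalSpace M]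
    (ι : FreeMonoid A →* M) (hdense : DenseRange ⇑ι)
    (hext : ∀ (N : Type) [Monoid N] [Finite N] (φ : FreeMonoid A →* N),
      ∃ ψ : M →* N, (∀ s : Set N, IsOpen (⇑ψ ⁻¹' s)) ∧ ∀ u, ψ (ι u) = φ u)
    (V : ∀ (S : Type) [Monoid S] [PartialOrder S], Prop)
    (hV : ∀ (S : Type) [Monoid S] [PartialOrder S], V S →
      Finite S ∧ ∀ a b c d : S, a ≤ b → c ≤ d → a * c ≤ b * d)
    (u v : M) :
    IneqHoldsIn V u v ↔
      ∀ L : Set (FreeMonoid A), VRecognizable V L →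
        u ∈ closure (⇑ι '' L) → v ∈ closure (⇑ι '' L) := by
  constructor
  · rintro huv L ⟨S, _, _, hVS, _, φ, F, hF, rfl⟩ hu
    obtain ⟨ψ, hψ, hψι⟩ := hext S φ
    have hL : ⇑φ ⁻¹' F = ⇑ι ⁻¹' (⇑ψ ⁻¹' F) := by
      ext w
      simp [hψι w]
    rw [hL, hdense.closure_image_preimage_of_isClopen
      (isClopen_preimage_of_forall_isOpen hψ F)] at hu ⊢
    exact hF _ _ (huv S hVS ψ hψ) hu
  · intro h S _ _ hVS ψ hψ
    have hcl := hdense.closure_image_preimage_of_isClopen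
      (isClopen_preimage_of_forall_isOpen hψ (Set.Ici (ψ u)))
    have hrec : VRecognizable V (⇑ι ⁻¹' (⇑ψ ⁻¹' Set.Ici (ψ u))) :=
      ⟨S, _, _, hVS, (hV S hVS).1, ψ.comp ι, Set.Ici (ψ u),
        fun _ _ hab ha => le_trans ha hab, rfl⟩
    have hv := h _ hrec (hcl.symm ▸ le_refl (ψ u))
    rwa [hcl] at hv

/-- Let `V` be a pseudovariety of (finite, compatibly) ordered monoids and let `M` be
the free profinite monoid over the finite alphabet `A` (axiomatized as below).  For
`u, v ∈ M`, the inequality `u ≤ v` holds in `V` if and only if for every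
`V`-recognizable language `L ⊆ A*`, `u ∈ closure L` implies `v ∈ closure L`. -/
theorem ineqHoldsIn_iff_closures
    {A M : Type*} [Fintype A] [Monoid M] [TopologicalSpace M]
    [CompactSpace M] [T2Space M]
    (hmul : Continuous fun p : M × M => p.1 * p.2)
    (ι : FreeMonoid A →* M) (hdense : DenseRange ⇑ι)
    (hext : ∀ (N : Type) [Monoid N] [Finite N] (φ : FreeMonoid A →* N),
      ∃ ψ : M →* N, (∀ s : Set N, IsOpen (⇑ψ ⁻¹' s)) ∧ ∀ u, ψ (ι u) = φ u)
    (V : ∀ (S : Type) [Monoid S] [PartialOrder S], Prop)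
    (hV : ∀ (S : Type) [Monoid S] [PartialOrder S], V S →
      Finite S ∧ ∀ a b c d : S, a ≤ b → c ≤ d → a * c ≤ b * d)
    (u v : M) :
    IneqHoldsIn V u v ↔
      ∀ L : Set (FreeMonoid A), VRecognizable V L →
        u ∈ closure (⇑ι '' L) → v ∈ closure (⇑ι '' L) :=
  ineqHoldsIn_iff_closures_general ι hdense hext V hV u v
end

section
/- Let t be an ω-term over a finite alphabet A and let u, v be elements of the free profinite aperiodic monoid Ω_A A. Then t represents the product uv if and only if there exists a decomposition (t_1, t_2) of t such that t_1 represents u and t_2 represents v. -/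
/-- ω-terms over the alphabet `A`: built from `1` and letters using binary
multiplication and the unary ω-power. -/
inductive OmegaTerm (A : Type*) : Type _ where
  | one : OmegaTerm A
  | letter : A → OmegaTerm A
  | mul : OmegaTerm A → OmegaTerm A → OmegaTerm A
  | omega : OmegaTerm A → OmegaTerm A

namespace OmegaTerm

variable {A : Type*}

/-- The ω-term `s^k` for `k ≥ 1` (`s^{k+1} = s^k · s`); `pow s 0` is the term `1`
but is never used with exponent `0` below. -/
def pow (s : OmegaTerm A) : ℕ → OmegaTerm A
  | 0 => OmegaTerm.one
  | 1 => s
  | k + 2 => (pow s (k + 1)).mul s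

/-- The ω-term `s^k · t`, where `k ∈ ℕ ∪ {ω}` (`none` denotes the exponent ω), with the
conventions `s^0 · t = t` and `s^ω · t = (s^ω) · t`. -/
def powMul (s : OmegaTerm A) : Option ℕ → OmegaTerm A → OmegaTerm A
  | none, t => (OmegaTerm.omega s).mul t
  | some 0, t => t
  | some (k + 1), t => (pow s (k + 1)).mul t

/-- The ω-term `t · s^k`, where `k ∈ ℕ ∪ {ω}`, with `t · s^0 = t`. -/
def mulPow (t s : OmegaTerm A) : Option ℕ → OmegaTerm A
  | none => t.mul (OmegaTerm.omega s)
  | some 0 => t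
  | some (k + 1) => t.mul (pow s (k + 1))

/-- Decompositions of ω-terms: if `t` is `1` or a letter, its decompositions are `(1,t)`
and `(t,1)`; if `t = t₁ · t₂`, they are `(s₁, s₂ · t₂)` for `(s₁,s₂)` a decomposition of
`t₁` and `(t₁ · s₁, s₂)` for `(s₁,s₂)` a decomposition of `t₂`; if `t = s^ω`, they are
`(s^k · s₁, s₂ · s^ℓ)` with `(s₁,s₂)` a decomposition of `s` and `k, ℓ ∈ ℕ ∪ {ω}`, at
least one of them equal to ω. -/
inductive Decomp : OmegaTerm A → OmegaTerm A → OmegaTerm A → Prop where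
  | base_left (t : OmegaTerm A) (h : t = OmegaTerm.one ∨ ∃ a, t = OmegaTerm.letter a) :
      Decomp t OmegaTerm.one t
  | base_right (t : OmegaTerm A) (h : t = OmegaTerm.one ∨ ∃ a, t = OmegaTerm.letter a) :
      Decomp t t OmegaTerm.one
  | mul_left {t₁ t₂ s₁ s₂ : OmegaTerm A} :
      Decomp t₁ s₁ s₂ → Decomp (t₁.mul t₂) s₁ (s₂.mul t₂)
  | mul_right {t₁ t₂ s₁ s₂ : OmegaTerm A} :
      Decomp t₂ s₁ s₂ → Decomp (t₁.mul t₂) (t₁.mul s₁) s₂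
  | omega_case {s s₁ s₂ : OmegaTerm A} (k ℓ : Option ℕ) (h : k = none ∨ ℓ = none) :
      Decomp s s₁ s₂ →
      Decomp (OmegaTerm.omega s) (powMul s k s₁) (mulPow s₂ s ℓ)

/-- Interpretation of ω-terms in a monoid `M` equipped with a unary ω-power operation
`w : M → M`, the letters being interpreted via `f : A → M`. -/
def eval {M : Type*} [Monoid M] (f : A → M) (w : M → M) : OmegaTerm A → M
  | OmegaTerm.one => 1
  | OmegaTerm.letter a => f a
  | OmegaTerm.mul t₁ t₂ => eval f w t₁ * eval f w t₂
  | OmegaTerm.omega t => w (eval f w t)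

end OmegaTerm

open Filter

/-!
Induction on `t`; products are handled by equidivisibility. For `s^ω` with `m` the value of `s`,
let `w m = u * v`. Since `m ^ n → w m` and multiplication is open, `(u, v)` is a limit of
factorizations of `m ^ (n + 1)` with `n → ∞`, and equidivisibility writes each of them as
`(m ^ j * p, q * m ^ k)` with `p * q = m` and `j + k = n`. Compactness of `ℕ∞ × M × M × ℕ∞` gives
a limit `(j, p, q, k)` with `j + k = ⊤`, so one of the two exponents is `ω`, and the induction
hypothesis applies to `p * q = m`. The converse holds because `w m` is idempotent and absorbs
the powers of `m`.
-/

open Topology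

section OmegaPower

variable {M : Type*} [Monoid M] [TopologicalSpace M] [ContinuousMul M] [T2Space M] {m e : M}

theorem pow_mul_eq_of_tendsto_pow (h : Tendsto (m ^ ·) atTop (𝓝 e)) (j : ℕ) : m ^ j * e = e :=
  tendsto_nhds_unique (h.const_mul (m ^ j))
    (((tendsto_add_atTop_iff_nat j).2 h).congr fun n => by rw [add_comm, pow_add])

theorem mul_pow_eq_of_tendsto_pow (h : Tendsto (m ^ ·) atTop (𝓝 e)) (j : ℕ) : e * m ^ j = e :=
  tendsto_nhds_unique (h.mul_const (m ^ j))
    (((tendsto_add_atTop_iff_nat j).2 h).congr fun n => by rw [pow_add])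

end OmegaPower

/-- `e` plays the role of `m ^ ω`. -/
def enatPow {M : Type*} [Monoid M] (m e : M) : ℕ∞ → M
  | ⊤ => e
  | (k : ℕ) => m ^ k

theorem continuous_enatPow {M : Type*} [Monoid M] [TopologicalSpace M] {m e : M}
    (h : Tendsto (m ^ ·) atTop (𝓝 e)) : Continuous (enatPow m e) := by
  refine continuous_iff_continuousAt.2 fun k => ?_
  induction k with
  | top =>
    refine (nhds_top_basis.tendsto_iff (𝓝 e).basis_sets).2 fun U hU => ?_
    obtain ⟨N, hN⟩ := mem_atTop_sets.1 (h hU)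
    refine ⟨N, ENat.natCast_lt_top N, fun k hk => ?_⟩
    induction k with
    | top => exact mem_of_mem_nhds hU
    | coe k => exact hN k (by exact_mod_cast (show (N : ℕ∞) < k from hk).le)
  | coe k => rw [ContinuousAt, ENat.nhds_natCast]; exact tendsto_pure_nhds _ _

def Equidivisible (M : Type*) [Mul M] : Prop :=
  ∀ s t u v : M, s * t = u * v → ∃ z : M, (s = u * z ∧ z * t = v) ∨ (s * z = u ∧ t = z * v)

theorem Equidivisible.exists_factor_of_mul_eq_pow {M : Type*} [Monoid M] (hM : Equidivisible M)
    {m : M} : ∀ {n : ℕ} {u v : M}, u * v = m ^ (n + 1) →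
      ∃ j k : ℕ, ∃ p q : M, p * q = m ∧ u = m ^ j * p ∧ v = q * m ^ k ∧ j + k = n
  | 0, u, v, h => ⟨0, 0, u, v, by simpa using h, by simp, by simp, rfl⟩
  | n + 1, u, v, h => by
    obtain ⟨z, ⟨rfl, hz⟩ | ⟨hz, rfl⟩⟩ := hM u v m (m ^ (n + 1)) (by rw [h, pow_succ'])
    · obtain ⟨j, k, p, q, hpq, rfl, rfl, rfl⟩ := hM.exists_factor_of_mul_eq_pow hz
      exact ⟨j + 1, k, p, q, hpq, by rw [pow_succ', mul_assoc], rfl, by omega⟩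
    · exact ⟨0, n + 1, u, z, hz, by simp, rfl, by omega⟩

theorem IsOpenMap.mem_closure_of_tendsto {X Y ι : Type*} [TopologicalSpace X]
    [TopologicalSpace Y] {f : X → Y} (hf : IsOpenMap f) {l : Filter ι} [l.NeBot] {y : ι → Y}
    {x : X} {S : Set X} (hy : Tendsto y l (𝓝 (f x))) (hS : ∀ᶠ i in l, f ⁻¹' {y i} ⊆ S) :
    x ∈ closure S := by
  refine mem_closure_iff_nhds.2 fun W hW => ?_
  obtain ⟨i, ⟨x', hx'W, hx'⟩, hi⟩ := ((hy.eventually_mem (hf.image_mem_nhds hW)).and hS).exists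
  exact ⟨x', hx'W, hi hx'⟩

theorem exists_enatPow_factorization_of_mul_eq {M : Type*} [Monoid M] [TopologicalSpace M]
    [CompactSpace M] [T2Space M] [ContinuousMul M] (hopen : IsOpenMap fun p : M × M => p.1 * p.2)
    (hequi : Equidivisible M) {m e u v : M} (hm : Tendsto (m ^ ·) atTop (𝓝 e))
    (huv : u * v = e) :
    ∃ j k : ℕ∞, (j = ⊤ ∨ k = ⊤) ∧
      ∃ p q : M, p * q = m ∧ u = enatPow m e j * p ∧ v = q * enatPow m e k := by
  have hE : Continuous (enatPow m e) := continuous_enatPow hm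
  let Φ (x : ℕ∞ × M × M × ℕ∞) : M × M :=
    (enatPow m e x.1 * x.2.1, x.2.2.1 * enatPow m e x.2.2.2)
  let F (N : ℕ) : Set (ℕ∞ × M × M × ℕ∞) :=
    {x | x.2.1 * x.2.2.1 = m ∧ (N : ℕ∞) ≤ x.1 + x.2.2.2}
  have hΦ : Continuous Φ := by fun_prop
  have hσ : Continuous fun x : ℕ∞ × M × M × ℕ∞ => x.1 + x.2.2.2 := by fun_prop
  have hF (N : ℕ) : IsClosed (F N) :=
    (isClosed_eq (by fun_prop) continuous_const).inter (isClosed_le continuous_const hσ)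
  -- `(u, v)` is a limit of factorizations of `m ^ (n + 1)`, `n ≥ N`, all lying in the compact
  -- set `Φ '' F N`
  have hmem (N : ℕ) : (u, v) ∈ Φ '' F N := by
    rw [← ((hF N).isCompact.image hΦ).isClosed.closure_eq]
    refine hopen.mem_closure_of_tendsto (huv ▸ (tendsto_add_atTop_iff_nat 1).2 hm) ?_
    filter_upwards [eventually_ge_atTop N] with n hn ⟨a, b⟩ hab
    obtain ⟨j, k, p, q, hpq, rfl, rfl, rfl⟩ := hequi.exists_factor_of_mul_eq_pow hab
    exact ⟨(j, p, q, k), ⟨hpq, show (N : ℕ∞) ≤ j + k by exact_mod_cast hn⟩, rfl⟩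
  obtain ⟨⟨j, p, q, k⟩, hx⟩ :=
    IsCompact.nonempty_iInter_of_sequence_nonempty_isCompact_isClosed
      (fun N => F N ∩ Φ ⁻¹' {(u, v)})
      (fun N => Set.inter_subset_inter_left _ fun x hx => ⟨hx.1, le_trans (by simp) hx.2⟩)
      (fun N => let ⟨x, hxF, hx⟩ := hmem N; ⟨x, hxF, hx⟩)
      ((hF 0).inter (isClosed_singleton.preimage hΦ)).isCompact
      (fun N => (hF N).inter (isClosed_singleton.preimage hΦ))
  simp only [Set.mem_iInter, Set.mem_inter_iff, Set.mem_preimage, Set.mem_singleton_iff] at hx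
  obtain ⟨hpq, -⟩ := (hx 0).1
  obtain ⟨hu, hv⟩ := Prod.ext_iff.1 (hx 0).2
  refine ⟨j, k, ENat.add_eq_top.1 (ENat.eq_top_iff_forall_ge.2 fun N => (hx N).1.2), p, q, hpq,
    hu.symm, hv.symm⟩

namespace OmegaTerm

variable {A M : Type*} [Monoid M] {f : A → M} {w : M → M}

theorem eval_pow (s : OmegaTerm A) (k : ℕ) : eval f w (s.pow (k + 1)) = eval f w s ^ (k + 1) := by
  induction k with
  | zero => simp [pow]
  | succ k ih => rw [pow, eval, ih, ← pow_succ]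

theorem eval_powMul_some (s t : OmegaTerm A) (j : ℕ) :
    eval f w (powMul s (some j) t) = eval f w s ^ j * eval f w t := by
  cases j <;> simp [powMul, eval, eval_pow]

theorem eval_mulPow_some (t s : OmegaTerm A) (j : ℕ) :
    eval f w (mulPow t s (some j)) = eval f w t * eval f w s ^ j := by
  cases j <;> simp [mulPow, eval, eval_pow]

theorem Decomp.eval_mul_eval (hidem : ∀ m : M, w m * w m = w m)
    (hleft : ∀ (m : M) (j : ℕ), m ^ j * w m = w m) (hright : ∀ (m : M) (j : ℕ), w m * m ^ j = w m)
    {t t₁ t₂ : OmegaTerm A} (hd : Decomp t t₁ t₂) : eval f w t₁ * eval f w t₂ = eval f w t := by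
  induction hd with
  | base_left t => simp [eval]
  | base_right t => simp [eval]
  | mul_left _ ih => simp only [eval]; rw [← mul_assoc, ih]
  | mul_right _ ih => simp only [eval]; rw [mul_assoc, ih]
  | @omega_case s s₁ s₂ k ℓ h _ ih =>
    set m := eval f w s
    have hm : w m * m = w m := by simpa using hright m 1
    have key (x y : M) : x * eval f w s₁ * (eval f w s₂ * y) = x * m * y := by
      rw [mul_assoc x, ← mul_assoc _ _ y, ih, mul_assoc]
    rcases k with _ | a <;> rcases ℓ with _ | b
    · simp only [powMul, mulPow, eval]; rw [key, hm, hidem]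
    · simp only [powMul, eval_mulPow_some, eval]; rw [key, hm, hright]
    · simp only [eval_powMul_some, mulPow, eval]; rw [key, ← pow_succ, hleft]
    · simp at h

theorem Decomp.exists_omega_enatPow {s s₁ s₂ : OmegaTerm A} (hd : Decomp s s₁ s₂) {j k : ℕ∞}
    (hjk : j = ⊤ ∨ k = ⊤) :
    ∃ t₁ t₂ : OmegaTerm A, Decomp s.omega t₁ t₂ ∧
      eval f w t₁ = enatPow (eval f w s) (w (eval f w s)) j * eval f w s₁ ∧
      eval f w t₂ = eval f w s₂ * enatPow (eval f w s) (w (eval f w s)) k := by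
  induction j with
  | top =>
    induction k with
    | top => exact ⟨_, _, .omega_case none none (.inl rfl) hd, rfl, rfl⟩
    | coe k => exact ⟨_, _, .omega_case none (some k) (.inl rfl) hd, rfl, eval_mulPow_some _ _ _⟩
  | coe j =>
    induction k with
    | top => exact ⟨_, _, .omega_case (some j) none (.inr rfl) hd, eval_powMul_some _ _ _, rfl⟩
    | coe k => simp at hjk

theorem exists_decomp_of_eval_eq_mul [TopologicalSpace M] [CompactSpace M] [T2Space M]
    [ContinuousMul M] (hopen : IsOpenMap fun p : M × M => p.1 * p.2) (hequi : Equidivisible M)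
    (hw : ∀ m : M, Tendsto (m ^ ·) atTop (𝓝 (w m))) (hone : ∀ u v : M, u * v = 1 → u = 1 ∧ v = 1)
    (hletter : ∀ (a : A) (u v : M), u * v = f a → (u = 1 ∧ v = f a) ∨ (u = f a ∧ v = 1)) :
    ∀ (t : OmegaTerm A) {u v : M}, eval f w t = u * v →
      ∃ t₁ t₂ : OmegaTerm A, Decomp t t₁ t₂ ∧ eval f w t₁ = u ∧ eval f w t₂ = v
  | one, u, v, h => by
    obtain ⟨rfl, rfl⟩ := hone u v h.symm
    exact ⟨one, one, .base_left _ (.inl rfl), rfl, rfl⟩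
  | letter a, u, v, h => by
    obtain ⟨rfl, rfl⟩ | ⟨rfl, rfl⟩ := hletter a u v h.symm
    · exact ⟨one, letter a, .base_left _ (.inr ⟨a, rfl⟩), rfl, rfl⟩
    · exact ⟨letter a, one, .base_right _ (.inr ⟨a, rfl⟩), rfl, rfl⟩
  | mul t₁ t₂, u, v, h => by
    obtain ⟨z, ⟨hz₁, hz₂⟩ | ⟨hz₁, hz₂⟩⟩ := hequi _ _ u v h
    · obtain ⟨r₁, r₂, hd, hr₁, rfl⟩ :=
        exists_decomp_of_eval_eq_mul hopen hequi hw hone hletter t₁ hz₁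
      exact ⟨r₁, r₂.mul t₂, hd.mul_left, hr₁, hz₂⟩
    · obtain ⟨r₁, r₂, hd, rfl, hr₂⟩ :=
        exists_decomp_of_eval_eq_mul hopen hequi hw hone hletter t₂ hz₂
      exact ⟨t₁.mul r₁, r₂, hd.mul_right, hz₁, hr₂⟩
  | omega s, u, v, h => by
    obtain ⟨j, k, hjk, p, q, hpq, rfl, rfl⟩ :=
      exists_enatPow_factorization_of_mul_eq hopen hequi (hw (eval f w s)) h.symm
    obtain ⟨s₁, s₂, hd, rfl, rfl⟩ :=
      exists_decomp_of_eval_eq_mul hopen hequi hw hone hletter s hpq.symm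
    exact hd.exists_omega_enatPow hjk

end OmegaTerm

/-- `M` plays the role of `Ω_A A`, and `w` that of the ω-power. -/
theorem represents_mul_iff_decomp_general
    {A M : Type*} [Monoid M] [TopologicalSpace M]
    [CompactSpace M] [T2Space M]
    (hcont : Continuous fun p : M × M => p.1 * p.2)
    (hopen : IsOpenMap fun p : M × M => p.1 * p.2)
    (hequi : ∀ s t u v : M, s * t = u * v →
      ∃ z : M, (s = u * z ∧ z * t = v) ∨ (s * z = u ∧ t = z * v))
    (f : A → M) (w : M → M)
    (hidem : ∀ m : M, w m * w m = w m)
    (hlim : ∀ m : M, Tendsto (fun n : ℕ => m ^ (n + 1)) atTop (nhds (w m)))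
    (hone : ∀ u v : M, u * v = 1 → u = 1 ∧ v = 1)
    (hletter : ∀ (a : A) (u v : M), u * v = f a → (u = 1 ∧ v = f a) ∨ (u = f a ∧ v = 1))
    (t : OmegaTerm A) (u v : M) :
    OmegaTerm.eval f w t = u * v ↔
      ∃ t₁ t₂ : OmegaTerm A, OmegaTerm.Decomp t t₁ t₂ ∧
        OmegaTerm.eval f w t₁ = u ∧ OmegaTerm.eval f w t₂ = v := by
  have : ContinuousMul M := ⟨hcont⟩
  have hw (m : M) : Tendsto (m ^ ·) atTop (𝓝 (w m)) := (tendsto_add_atTop_iff_nat 1).1 (hlim m)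
  refine ⟨OmegaTerm.exists_decomp_of_eval_eq_mul hopen hequi hw hone hletter t, ?_⟩
  rintro ⟨t₁, t₂, hd, rfl, rfl⟩
  exact (hd.eval_mul_eval hidem (fun m => pow_mul_eq_of_tendsto_pow (hw m))
    (fun m => mul_pow_eq_of_tendsto_pow (hw m))).symm

/-- Let `M` be the free profinite aperiodic monoid over the finite alphabet `A`
(axiomatized here by: compact Hausdorff topological monoid, open multiplication,
equidivisibility, ω-power `w m` = the unique idempotent in the closed subsemigroup
generated by `m` = the limit of the powers of `m`, and `1` and letters having only
trivial factorizations).  An ω-term `t` represents the product `u * v` if and only if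
there is a decomposition `(t₁, t₂)` of `t` such that `t₁` represents `u` and `t₂`
represents `v`. -/
theorem represents_mul_iff_decomp
    {A M : Type*} [Fintype A] [Monoid M] [TopologicalSpace M]
    [CompactSpace M] [T2Space M]
    (hcont : Continuous fun p : M × M => p.1 * p.2)
    (hopen : IsOpenMap fun p : M × M => p.1 * p.2)
    (hequi : ∀ s t u v : M, s * t = u * v →
      ∃ z : M, (s = u * z ∧ z * t = v) ∨ (s * z = u ∧ t = z * v))
    (f : A → M) (w : M → M)
    (hidem : ∀ m : M, w m * w m = w m)
    (hlim : ∀ m : M, Tendsto (fun n : ℕ => m ^ (n + 1)) atTop (nhds (w m)))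
    (huniq : ∀ m e : M, e * e = e → e ∈ closure {x : M | ∃ n : ℕ, x = m ^ (n + 1)} →
      e = w m)
    (hone : ∀ u v : M, u * v = 1 → u = 1 ∧ v = 1)
    (hletter : ∀ (a : A) (u v : M), u * v = f a → (u = 1 ∧ v = f a) ∨ (u = f a ∧ v = 1))
    (t : OmegaTerm A) (u v : M) :
    OmegaTerm.eval f w t = u * v ↔
      ∃ t₁ t₂ : OmegaTerm A, OmegaTerm.Decomp t t₁ t₂ ∧
        OmegaTerm.eval f w t₁ = u ∧ OmegaTerm.eval f w t₂ = v :=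
  represents_mul_iff_decomp_general hcont hopen hequi f w hidem hlim hone hletter t u v
end

section
/- Define μ(t) = (μ_ω(t), μ_ℓ(t)) for ω-terms t by: μ(1) = μ(a) = (0,0) for letters a; μ(s^ω) = (μ_ω(s)+1, 0); μ(t_1 · s^ω) = max{μ(t_1), μ(s^ω)}; μ(t_1 · t_2) = max{μ(t_1), μ(t_2)+(0,1)} if t_2 is not an ω-power, where pairs are ordered lexicographically and added componentwise. Then for every ω-term t and every decomposition (t̄, t′) of t, one has μ(t′) ≤ μ(t). -/
namespace OmegaTerm

/-- The measure `μ(t) = (μ_ω(t), μ_ℓ(t)) ∈ ℕ ×ₗ ℕ` (lexicographically ordered) of an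
ω-term: `μ(1) = μ(a) = (0,0)`, `μ(s^ω) = (μ_ω(s)+1, 0)`,
`μ(t₁ · s^ω) = max {μ(t₁), μ(s^ω)}`, and `μ(t₁ · t₂) = max {μ(t₁), μ(t₂) + (0,1)}`
when `t₂` is not an ω-power. -/
def mu {A : Type*} : OmegaTerm A → ℕ ×ₗ ℕ
  | OmegaTerm.one => toLex (0, 0)
  | OmegaTerm.letter _ => toLex (0, 0)
  | OmegaTerm.omega s => toLex ((ofLex (mu s)).1 + 1, 0)
  | OmegaTerm.mul t₁ (OmegaTerm.omega s) => max (mu t₁) (toLex ((ofLex (mu s)).1 + 1, 0))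
  | OmegaTerm.mul t₁ t₂ => max (mu t₁) (toLex ((ofLex (mu t₂)).1, (ofLex (mu t₂)).2 + 1))

end OmegaTerm

namespace OmegaTerm

variable {A : Type*}

private lemma lex_fst_mono {a b : ℕ ×ₗ ℕ} (h : a ≤ b) :
    (ofLex a).1 ≤ (ofLex b).1 := by
  rw [← toLex_ofLex a, ← toLex_ofLex b, Prod.Lex.le_iff] at h
  rcases h with h | ⟨h, _⟩
  · exact h.le
  · exact h.le

private lemma lex_le_snd_succ (p : ℕ ×ₗ ℕ) :
    p ≤ toLex ((ofLex p).1, (ofLex p).2 + 1) := by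
  rw [← toLex_ofLex p, Prod.Lex.le_iff]
  exact Or.inr ⟨rfl, Nat.le_succ _⟩

private lemma lex_lt_fst_succ {p q : ℕ ×ₗ ℕ} (h : p ≤ q) :
    p < toLex ((ofLex q).1 + 1, 0) := by
  rw [← toLex_ofLex p, Prod.Lex.lt_iff]
  exact Or.inl (Nat.lt_succ_of_le (lex_fst_mono h))

private lemma lex_zero_le (p : ℕ ×ₗ ℕ) : toLex ((0 : ℕ), (0 : ℕ)) ≤ p := by
  rw [← toLex_ofLex p, Prod.Lex.le_iff]
  rcases Nat.eq_zero_or_pos (ofLex p).1 with h | h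
  · exact Or.inr ⟨h.symm, Nat.zero_le _⟩
  · exact Or.inl h

private lemma mu_mul_le (t₁ t₂ : OmegaTerm A) :
    mu (t₁.mul t₂) ≤ max (mu t₁) (toLex ((ofLex (mu t₂)).1, (ofLex (mu t₂)).2 + 1)) := by
  cases t₂ with
  | omega s =>
      exact max_le_max le_rfl (lex_le_snd_succ _)
  | one => exact le_rfl
  | letter a => exact le_rfl
  | mul a b => exact le_rfl

private lemma mu_mul_mono_left {t₁ s₂ : OmegaTerm A} (t₂ : OmegaTerm A)
    (h : mu s₂ ≤ mu t₁) : mu (s₂.mul t₂) ≤ mu (t₁.mul t₂) := by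
  cases t₂ <;> exact max_le_max h le_rfl

private lemma mu_le_mul_right (t₁ t₂ : OmegaTerm A) : mu t₂ ≤ mu (t₁.mul t₂) := by
  cases t₂ with
  | omega s => exact le_max_right _ _
  | one => exact le_trans (lex_le_snd_succ _) (le_max_right _ _)
  | letter a => exact le_trans (lex_le_snd_succ _) (le_max_right _ _)
  | mul a b => exact le_trans (lex_le_snd_succ _) (le_max_right _ _)

private lemma fst_mu_pow_le (s : OmegaTerm A) :
    ∀ k : ℕ, (ofLex (mu (pow s (k + 1)))).1 ≤ (ofLex (mu s)).1
  | 0 => le_rfl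
  | k + 1 => by
      have h1 := fst_mu_pow_le s k
      have h2 := mu_mul_le (pow s (k + 1)) s
      have h3 := lex_fst_mono h2
      show (ofLex (mu ((pow s (k + 1)).mul s))).1 ≤ (ofLex (mu s)).1
      refine le_trans h3 ?_
      rcases max_choice (mu (pow s (k + 1)))
          (toLex ((ofLex (mu s)).1, (ofLex (mu s)).2 + 1)) with h | h
      · rw [h]; exact h1
      · rw [h]; exact le_rfl

end OmegaTerm

/-- For every ω-term `t` and every decomposition `(t̄, t′)` of `t`, one has
`μ(t′) ≤ μ(t)` in the lexicographic order. -/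
theorem mu_decomp_le {A : Type*} {t tb t' : OmegaTerm A}
    (hd : OmegaTerm.Decomp t tb t') :
    OmegaTerm.mu t' ≤ OmegaTerm.mu t := by
  induction hd with
  | base_left t h => exact le_rfl
  | base_right t h => exact OmegaTerm.lex_zero_le _
  | mul_left hd ih => exact OmegaTerm.mu_mul_mono_left _ ih
  | mul_right hd ih => exact le_trans ih (OmegaTerm.mu_le_mul_right _ _)
  | omega_case k l h hd ih =>
      rename_i s s₁ s₂
      show OmegaTerm.mu (OmegaTerm.mulPow s₂ s l) ≤ toLex ((ofLex (OmegaTerm.mu s)).1 + 1, 0)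
      match l with
      | none =>
          show OmegaTerm.mu (s₂.mul (OmegaTerm.omega s)) ≤ _
          have : OmegaTerm.mu (s₂.mul (OmegaTerm.omega s))
              = max (OmegaTerm.mu s₂) (toLex ((ofLex (OmegaTerm.mu s)).1 + 1, 0)) := rfl
          rw [this]
          exact max_le (le_of_lt (OmegaTerm.lex_lt_fst_succ ih)) le_rfl
      | some 0 =>
          exact le_of_lt (OmegaTerm.lex_lt_fst_succ ih)
      | some (k' + 1) =>
          show OmegaTerm.mu (s₂.mul (OmegaTerm.pow s (k' + 1))) ≤ _
          refine le_trans (OmegaTerm.mu_mul_le _ _) (max_le (le_of_lt (OmegaTerm.lex_lt_fst_succ ih)) ?_)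
          have hfst := OmegaTerm.fst_mu_pow_le s k'
          rw [Prod.Lex.le_iff]
          exact Or.inl (Nat.lt_succ_of_le hfst)
end

section
/- With μ as defined, if t is an ω-term, (t̄, t′) is a decomposition of t, and μ(t′) = μ(t), then one of the following holds: (1) t is 1 or a letter; (2) t = s_1·s_2 and (t̄,t′) = (s̄, s′·s_2) for some decomposition (s̄,s′) of s_1; (3) t = s^ω and (t̄,t′) = (s^k·s̄, s′·s^ω) for some decomposition (s̄,s′) of s and k ∈ ℕ ∪ {ω}; (4) t = s_1·s^ω and (t̄,t′) = (s_1·(s^k·s̄), s′·s^ω) for some decomposition (s̄,s′) of s and k ∈ ℕ ∪ {ω}. -/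
/-!
A component `t′` of a decomposition of `t` never has larger measure than `t`. Passing into
a right factor `t₂` that is not an ω-power strictly lowers the measure, since `μ(t₁ · t₂)`
dominates `μ(t₂) + (0,1)`; and the right component `s′ · s^ℓ` of a decomposition of `s^ω`
with `ℓ` finite has ω-depth at most `μ_ω(s)`, hence lies strictly below `μ(s^ω)`. So
`μ(t′) = μ(t)` leaves only a passage into a left factor, or an ω-power kept on the right.
-/

lemma Prod.Lex.lt_toLex_snd_succ (x : ℕ ×ₗ ℕ) : x < toLex ((ofLex x).1, (ofLex x).2 + 1) :=
  Prod.Lex.lt_iff.2 (Or.inr ⟨rfl, Nat.lt_succ_self _⟩)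

namespace OmegaTerm

variable {A : Type*}

/-- The component `μ_ω` of `μ = (μ_ω, μ_ℓ)`. -/
def muOmega (t : OmegaTerm A) : ℕ := (ofLex (mu t)).1

lemma muOmega_le_muOmega {t s : OmegaTerm A} (h : mu t ≤ mu s) : muOmega t ≤ muOmega s :=
  Prod.Lex.monotone_fst _ _ h

lemma muOmega_mul (a b : OmegaTerm A) : muOmega (a.mul b) = max (muOmega a) (muOmega b) := by
  have hmax (x y : ℕ ×ₗ ℕ) : (ofLex (max x y)).1 = max (ofLex x).1 (ofLex y).1 :=
    Monotone.map_max (f := fun x : ℕ ×ₗ ℕ => (ofLex x).1) Prod.Lex.monotone_fst_ofLex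
  cases b <;> simp only [muOmega, mu, hmax, ofLex_toLex]

lemma muOmega_pow_le (s : OmegaTerm A) : ∀ n, muOmega (pow s n) ≤ muOmega s
  | 0 => Nat.zero_le _
  | 1 => le_rfl
  | n + 2 => by
    rw [pow, muOmega_mul]
    exact max_le (muOmega_pow_le s (n + 1)) le_rfl

lemma mu_lt_mu_omega {t s : OmegaTerm A} (h : muOmega t ≤ muOmega s) : mu t < mu (omega s) :=
  Prod.Lex.lt_iff.2 (Or.inl (Nat.lt_succ_of_le h))

lemma mu_mulPow_some_lt {v s : OmegaTerm A} (h : muOmega v ≤ muOmega s) :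
    ∀ m, mu (mulPow v s (some m)) < mu (omega s)
  | 0 => mu_lt_mu_omega h
  | m + 1 => mu_lt_mu_omega <| by
    rw [mulPow, muOmega_mul]
    exact max_le h (muOmega_pow_le s (m + 1))

lemma mu_mul_le_mu_mul_left {a b : OmegaTerm A} (h : mu a ≤ mu b) (c : OmegaTerm A) :
    mu (a.mul c) ≤ mu (b.mul c) := by
  cases c <;> exact max_le_max h le_rfl

lemma mu_le_mu_mul_right (a b : OmegaTerm A) : mu b ≤ mu (a.mul b) := by
  cases b with
  | one | letter _ => exact bot_le
  | omega s => exact le_max_right _ _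
  | mul c d => exact (Prod.Lex.lt_toLex_snd_succ _).le.trans (le_max_right _ _)

lemma mu_lt_mu_mul_right (a : OmegaTerm A) {b : OmegaTerm A} (hb : ∀ s, b ≠ omega s) :
    mu b < mu (a.mul b) := by
  cases b with
  | omega s => exact absurd rfl (hb s)
  | _ => exact (Prod.Lex.lt_toLex_snd_succ _).trans_le (le_max_right _ _)

lemma Decomp.mu_le {t u v : OmegaTerm A} (h : Decomp t u v) : mu v ≤ mu t := by
  induction h with
  | base_left => exact le_rfl
  | base_right => exact bot_le
  | mul_left _ ih => exact mu_mul_le_mu_mul_left ih _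
  | mul_right _ ih => exact ih.trans (mu_le_mu_mul_right _ _)
  | omega_case k ℓ _ _ ih =>
    cases ℓ with
    | none => exact max_le (mu_lt_mu_omega (muOmega_le_muOmega ih)).le le_rfl
    | some m => exact (mu_mulPow_some_lt (muOmega_le_muOmega ih) m).le

lemma Decomp.exists_of_omega_of_mu_eq {s u v : OmegaTerm A} (h : Decomp (omega s) u v)
    (heq : mu v = mu (omega s)) :
    ∃ sb s' k, Decomp s sb s' ∧ u = powMul s k sb ∧ v = s'.mul (omega s) := by
  cases h with
  | base_left _ hb | base_right _ hb => simp at hb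
  | omega_case k ℓ _ hd =>
    cases ℓ with
    | none => exact ⟨_, _, k, hd, rfl, rfl⟩
    | some m => exact absurd heq (mu_mulPow_some_lt (muOmega_le_muOmega hd.mu_le) m).ne

end OmegaTerm

/-- If `(t̄, t′)` is a decomposition of the ω-term `t` and `μ(t′) = μ(t)`, then one of
the following four cases occurs:
(1) `t` is `1` or a letter;
(2) `t = s₁ · s₂` and `(t̄, t′) = (s̄, s′ · s₂)` for some decomposition `(s̄, s′)` of `s₁`;
(3) `t = s^ω` and `(t̄, t′) = (s^k · s̄, s′ · s^ω)` for some decomposition `(s̄, s′)` of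
`s` and some `k ∈ ℕ ∪ {ω}`;
(4) `t = s₁ · s^ω` and `(t̄, t′) = (s₁ · (s^k · s̄), s′ · s^ω)` for some decomposition
`(s̄, s′)` of `s` and some `k ∈ ℕ ∪ {ω}`. -/
theorem mu_eq_cases {A : Type*} {t tb t' : OmegaTerm A}
    (hd : OmegaTerm.Decomp t tb t')
    (heq : OmegaTerm.mu t' = OmegaTerm.mu t) :
    (t = OmegaTerm.one ∨ ∃ a, t = OmegaTerm.letter a) ∨
    (∃ s₁ s₂ sb s' : OmegaTerm A, t = s₁.mul s₂ ∧ OmegaTerm.Decomp s₁ sb s' ∧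
      tb = sb ∧ t' = s'.mul s₂) ∨
    (∃ (s sb s' : OmegaTerm A) (k : Option ℕ), t = OmegaTerm.omega s ∧
      OmegaTerm.Decomp s sb s' ∧ tb = OmegaTerm.powMul s k sb ∧
      t' = s'.mul (OmegaTerm.omega s)) ∨
    (∃ (s₁ s sb s' : OmegaTerm A) (k : Option ℕ), t = s₁.mul (OmegaTerm.omega s) ∧
      OmegaTerm.Decomp s sb s' ∧ tb = s₁.mul (OmegaTerm.powMul s k sb) ∧
      t' = s'.mul (OmegaTerm.omega s)) := by
  open OmegaTerm in
  cases hd with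
  | base_left _ h | base_right _ h => exact Or.inl h
  | mul_left h => exact Or.inr (Or.inl ⟨_, _, _, _, rfl, h, rfl, rfl⟩)
  | @mul_right t₁ t₂ _ _ h =>
    obtain ⟨s, rfl⟩ : ∃ s, t₂ = omega s := by
      by_contra! hne
      exact (h.mu_le.trans_lt (mu_lt_mu_mul_right t₁ hne)).ne heq
    obtain ⟨sb, s', k, hd, htb, ht'⟩ :=
      h.exists_of_omega_of_mu_eq (le_antisymm h.mu_le (heq ▸ mu_le_mu_mul_right _ _))
    exact Or.inr (Or.inr (Or.inr ⟨t₁, s, sb, s', k, rfl, hd, congrArg t₁.mul htb, ht'⟩))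
  | omega_case k ℓ hkl h =>
    obtain ⟨sb, s', k', hd, htb, ht'⟩ :=
      (Decomp.omega_case k ℓ hkl h).exists_of_omega_of_mu_eq heq
    exact Or.inr (Or.inr (Or.inl ⟨_, sb, s', k', rfl, hd, htb, ht'⟩))
end
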